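/- Theorem (extensionality for values): let v and w be values, E a term and x a λ-variable. If v ≡ w, then E[x:=v] ≡ E[x:=w]. -/

import Mathlib

namespace CBV

/-! ## Syntax: values, terms, stacks, processes of the call-by-value λμ-calculus.
    λ-variables, μ-variables, term variables, labels and constructors are all
    represented by natural numbers. -/

mutual
  /-- Values: `x`, `λx.t`, `C[v]`, `{lᵢ = vᵢ}`. -/
  inductive Val : Type where
    | var : ℕ → Val                      -- λ-variable x
    | lam : ℕ → Trm → Val                -- λx.t
    | cns : ℕ → Val → Val                -- C[v]
    | rcd : Flds → Val                   -- {lᵢ = vᵢ}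
  /-- Record fields: a finite list of (label, value) pairs. -/
  inductive Flds : Type where
    | nil : Flds
    | cons : ℕ → Val → Flds → Flds
  /-- Terms: `a`, `v`, `t u`, `μα.t`, `p`, `v.l`, `case_v [Cᵢ[xᵢ] → tᵢ]`, `δ_{v,w}`. -/
  inductive Trm : Type where
    | tvar : ℕ → Trm                     -- term variable a
    | val : Val → Trm
    | app : Trm → Trm → Trm
    | mu : ℕ → Trm → Trm                 -- μα.t
    | prc : Proc → Trm
    | prj : Val → ℕ → Trm                -- v.l
    | cse : Val → Brs → Trm              -- case_v [...]
    | dlt : Val → Val → Trm              -- δ_{v,w}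
  /-- Case branches: a finite list of (constructor, bound λ-variable, body). -/
  inductive Brs : Type where
    | nil : Brs
    | cons : ℕ → ℕ → Trm → Brs → Brs
  /-- Stacks: `α`, `v.π`, `[t]π`. -/
  inductive Stk : Type where
    | svar : ℕ → Stk                     -- stack (μ-)variable α
    | push : Val → Stk → Stk             -- v.π
    | frame : Trm → Stk → Stk            -- [t]π
  /-- Processes: `t ∗ π`. -/
  inductive Proc : Type where
    | mk : Trm → Stk → Proc
end

/-- Lookup of a label in a record. -/
def Flds.lookup : Flds → ℕ → Option Val
  | .nil, _ => none
  | .cons l v fs, k => if l = k then some v else fs.lookup k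

/-- Lookup of a constructor among case branches, returning the bound variable and body. -/
def Brs.lookup : Brs → ℕ → Option (ℕ × Trm)
  | .nil, _ => none
  | .cons c x t bs, k => if c = k then some (x, t) else bs.lookup k

/-- A substitution maps λ-variables to values, μ-variables to stacks and
    term variables to terms (totally; the identity outside its support). -/
structure Subst : Type where
  lamS : ℕ → Val
  muS  : ℕ → Stk
  trmS : ℕ → Trm

/-- The identity substitution. -/
def Subst.id : Subst := ⟨Val.var, Stk.svar, Trm.tvar⟩

/-- The substitution [x := v] of a single λ-variable. -/
def subst1Lam (x : ℕ) (v : Val) : Subst :=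
  { Subst.id with lamS := Function.update Val.var x v }

/-- The substitution [α := π] of a single μ-variable. -/
def subst1Mu (α : ℕ) (π : Stk) : Subst :=
  { Subst.id with muS := Function.update Stk.svar α π }

/-- The substitution [a := t] of a single term variable. -/
def subst1Trm (a : ℕ) (t : Trm) : Subst :=
  { Subst.id with trmS := Function.update Trm.tvar a t }

/-- Remove a λ-variable from the support of a substitution (used under binders). -/
def Subst.skipLam (σ : Subst) (x : ℕ) : Subst :=
  { σ with lamS := Function.update σ.lamS x (Val.var x) }

/-- Remove a μ-variable from the support of a substitution (used under binders). -/
def Subst.skipMu (σ : Subst) (α : ℕ) : Subst :=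
  { σ with muS := Function.update σ.muS α (Stk.svar α) }

mutual
  /-- Application of a substitution to a value. -/
  def substVal (σ : Subst) : Val → Val
    | .var x => σ.lamS x
    | .lam x t => .lam x (substTrm (σ.skipLam x) t)
    | .cns c v => .cns c (substVal σ v)
    | .rcd fs => .rcd (substFlds σ fs)
  /-- Application of a substitution to record fields. -/
  def substFlds (σ : Subst) : Flds → Flds
    | .nil => .nil
    | .cons l v fs => .cons l (substVal σ v) (substFlds σ fs)
  /-- Application of a substitution to a term. -/
  def substTrm (σ : Subst) : Trm → Trm
    | .tvar a => σ.trmS a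
    | .val v => .val (substVal σ v)
    | .app t u => .app (substTrm σ t) (substTrm σ u)
    | .mu α t => .mu α (substTrm (σ.skipMu α) t)
    | .prc p => .prc (substPrc σ p)
    | .prj v l => .prj (substVal σ v) l
    | .cse v bs => .cse (substVal σ v) (substBrs σ bs)
    | .dlt v w => .dlt (substVal σ v) (substVal σ w)
  /-- Application of a substitution to case branches. -/
  def substBrs (σ : Subst) : Brs → Brs
    | .nil => .nil
    | .cons c x t bs => .cons c x (substTrm (σ.skipLam x) t) (substBrs σ bs)
  /-- Application of a substitution to a stack. -/
  def substStk (σ : Subst) : Stk → Stk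
    | .svar α => σ.muS α
    | .push v π => .push (substVal σ v) (substStk σ π)
    | .frame t π => .frame (substTrm σ t) (substStk σ π)
  /-- Application of a substitution to a process. -/
  def substPrc (σ : Subst) : Proc → Proc
    | .mk t π => .mk (substTrm σ t) (substStk σ π)
end

/-! ## The reduction relation (≻). -/

/-- The reduction relation (≻) of the Krivine abstract machine. -/
inductive Red : Proc → Proc → Prop where
  | app (t u : Trm) (π : Stk) :
      Red (.mk (.app t u) π) (.mk u (.frame t π))
  | frame (v : Val) (t : Trm) (π : Stk) :
      Red (.mk (.val v) (.frame t π)) (.mk t (.push v π))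
  | beta (x : ℕ) (t : Trm) (v : Val) (π : Stk) :
      Red (.mk (.val (.lam x t)) (.push v π)) (.mk (substTrm (subst1Lam x v) t) π)
  | mu (α : ℕ) (t : Trm) (π : Stk) :
      Red (.mk (.mu α t) π) (.mk (substTrm (subst1Mu α π) t) π)
  | prc (p : Proc) (π : Stk) :
      Red (.mk (.prc p) π) p
  | prj (fs : Flds) (l : ℕ) (v : Val) (π : Stk) :
      fs.lookup l = some v →
      Red (.mk (.prj (.rcd fs) l) π) (.mk (.val v) π)
  | cse (c : ℕ) (v : Val) (bs : Brs) (x : ℕ) (t : Trm) (π : Stk) :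
      bs.lookup c = some (x, t) →
      Red (.mk (.cse (.cns c v) bs) π) (.mk (substTrm (subst1Lam x v) t) π)

/-- k-fold application of a relation. -/
def iterRel (R : Proc → Proc → Prop) : ℕ → Proc → Proc → Prop
  | 0 => Eq
  | k + 1 => fun p r => ∃ q, R p q ∧ iterRel R k q r

/-- A process is final if it is of the form `v ∗ α`. -/
def Final (p : Proc) : Prop :=
  ∃ (v : Val) (α : ℕ), p = .mk (.val v) (.svar α)

/-- A process is δ-like if it is of the form `δ_{v,w} ∗ π`. -/
def DeltaLike (p : Proc) : Prop :=
  ∃ (v w : Val) (π : Stk), p = .mk (.dlt v w) π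

/-- A process is blocked if it has no (≻)-reduct. -/
def Blocked (p : Proc) : Prop := ¬ ∃ q, Red p q

/-- A process is stuck if it is neither final nor δ-like, and all its
    substitution instances are blocked. -/
def Stuck (p : Proc) : Prop :=
  ¬ Final p ∧ ¬ DeltaLike p ∧ ∀ σ : Subst, Blocked (substPrc σ p)

/-- A process is non-terminating if it reaches no blocked process. -/
def NonTerminating (p : Proc) : Prop :=
  ¬ ∃ q, Relation.ReflTransGen Red p q ∧ Blocked q

/-- `p ⇓_R`: the process `p` converges for the reduction relation `R`,
    i.e. it `R`-reduces to a final process. -/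
def ConvergesIn (R : Proc → Proc → Prop) (p : Proc) : Prop :=
  ∃ q, Relation.ReflTransGen R p q ∧ Final q

/-- The indexed reduction relation (↪ᵢ) = (≻) ∪ {(δ_{v,w} ∗ π, v ∗ π) | ∃ j < i, v ≢ⱼ w}.
    (The condition `v ≢ⱼ w` is inlined; it coincides with `¬ EquivI j v w` below.) -/
def RedI : ℕ → Proc → Proc → Prop
  | i => fun p q =>
      Red p q ∨
      ∃ (v w : Val) (π : Stk), p = .mk (.dlt v w) π ∧ q = .mk (.val v) π ∧
        ∃ j, ∃ _ : j < i,
          ¬ (∀ k, ∀ _ : k ≤ j, ∀ (π' : Stk) (σ : Subst),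
              ConvergesIn (RedI k) (.mk (substTrm σ (.val v)) π') ↔
              ConvergesIn (RedI k) (.mk (substTrm σ (.val w)) π'))
  termination_by i => i
  decreasing_by omega

/-- The indexed observational equivalence (≡ᵢ). -/
def EquivI (i : ℕ) (t u : Trm) : Prop :=
  ∀ j, j ≤ i → ∀ (π : Stk) (σ : Subst),
    ConvergesIn (RedI j) (.mk (substTrm σ t) π) ↔
    ConvergesIn (RedI j) (.mk (substTrm σ u) π)

/-- The reduction relation (↪) = ∪ᵢ (↪ᵢ). -/
def RedFull (p q : Proc) : Prop := ∃ i, RedI i p q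

/-- Observational equivalence (≡) = ∩ᵢ (≡ᵢ). -/
def Equiv (t u : Trm) : Prop := ∀ i, EquivI i t u

/-! ## The pole and orthogonality. -/

/-- The pole ⫫ = {p | p ⇓_↪}. -/
def Pole : Set Proc := {p | ConvergesIn RedFull p}

/-- Orthogonal of a set of values: φ^⊥ = {π | ∀ v ∈ φ, v ∗ π ∈ ⫫}. -/
def orth (φ : Set Val) : Set Stk :=
  {π | ∀ v ∈ φ, Proc.mk (.val v) π ∈ Pole}

/-- Bi-orthogonal of a set of values: φ^⊥⊥ = {t | ∀ π ∈ φ^⊥, t ∗ π ∈ ⫫}. -/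
def biorth (φ : Set Val) : Set Trm :=
  {t | ∀ π ∈ orth φ, Proc.mk t π ∈ Pole}

/-! ## Free variables and closedness. -/

/-- The kinds of variables: λ-variables, μ-variables, term variables,
    predicate variables. -/
inductive VKind : Type where
  | lam | mu | trm | prd
deriving DecidableEq

mutual
  /-- Free variables (of every kind) of a value. -/
  def fvVal : Val → Set (VKind × ℕ)
    | .var x => {(VKind.lam, x)}
    | .lam x t => fvTrm t \ {(VKind.lam, x)}
    | .cns _ v => fvVal v
    | .rcd fs => fvFlds fs
  /-- Free variables of record fields. -/
  def fvFlds : Flds → Set (VKind × ℕ)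
    | .nil => ∅
    | .cons _ v fs => fvVal v ∪ fvFlds fs
  /-- Free variables of a term. -/
  def fvTrm : Trm → Set (VKind × ℕ)
    | .tvar a => {(VKind.trm, a)}
    | .val v => fvVal v
    | .app t u => fvTrm t ∪ fvTrm u
    | .mu α t => fvTrm t \ {(VKind.mu, α)}
    | .prc p => fvPrc p
    | .prj v _ => fvVal v
    | .cse v bs => fvVal v ∪ fvBrs bs
    | .dlt v w => fvVal v ∪ fvVal w
  /-- Free variables of case branches. -/
  def fvBrs : Brs → Set (VKind × ℕ)
    | .nil => ∅
    | .cons _ x t bs => (fvTrm t \ {(VKind.lam, x)}) ∪ fvBrs bs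
  /-- Free variables of a stack. -/
  def fvStk : Stk → Set (VKind × ℕ)
    | .svar α => {(VKind.mu, α)}
    | .push v π => fvVal v ∪ fvStk π
    | .frame t π => fvTrm t ∪ fvStk π
  /-- Free variables of a process. -/
  def fvPrc : Proc → Set (VKind × ℕ)
    | .mk t π => fvTrm t ∪ fvStk π
end

/-- A term is closed if it contains no free variable of any kind. -/
def ClosedTrm (t : Trm) : Prop := fvTrm t = ∅

end CBV

/-!
Substitution in this calculus is not capture-avoiding, and `σ` enters a binder with that binder
reset (`skipLam`, `skipMu`); so in `(E[x:=v])σ` each occurrence of `v` becomes `(σ.skips L) v`,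
where `L` lists the binders above the occurrence. Pick `base` above every variable in sight and
replace each free occurrence of `x` in `E` under the binders `L` by the hole variable
`base + encode L` (`holesT`): then `(E[x:=A])σ` is the holed term under `σ` patched to send the
hole `L` to `(σ.skips L) A`. The holes are switched from `v` to `w` one at a time, and each
switch is an instance of `v ≡ w`: `u ∗ [λZ.t]π` reduces deterministically to `t[Z:=u] ∗ π`, so
with `Z` fresh, `t[Z:=vτ]` and `t[Z:=wτ]` converge together. A `base` exists once `σ` has been
cut down to the finitely many variables that occur.
-/

namespace CBV

mutual
  def maxVarV : Val → ℕ
    | .var z => z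
    | .lam y t => max y (maxVarT t)
    | .cns _ v => maxVarV v
    | .rcd fs => maxVarF fs
  def maxVarF : Flds → ℕ
    | .nil => 0
    | .cons _ v fs => max (maxVarV v) (maxVarF fs)
  def maxVarT : Trm → ℕ
    | .tvar a => a
    | .val v => maxVarV v
    | .app t u => max (maxVarT t) (maxVarT u)
    | .mu α t => max α (maxVarT t)
    | .prc p => maxVarP p
    | .prj v _ => maxVarV v
    | .cse v bs => max (maxVarV v) (maxVarB bs)
    | .dlt v w => max (maxVarV v) (maxVarV w)
  def maxVarB : Brs → ℕ
    | .nil => 0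
    | .cons _ y t bs => max y (max (maxVarT t) (maxVarB bs))
  def maxVarS : Stk → ℕ
    | .svar α => α
    | .push v π => max (maxVarV v) (maxVarS π)
    | .frame t π => max (maxVarT t) (maxVarS π)
  def maxVarP : Proc → ℕ
    | .mk t π => max (maxVarT t) (maxVarS π)
end

attribute [ext] Subst

namespace Subst

structure AgreeUpTo (σ τ : Subst) (n : ℕ) : Prop where
  lam : ∀ z ≤ n, σ.lamS z = τ.lamS z
  mu : ∀ α ≤ n, σ.muS α = τ.muS α
  trm : ∀ a ≤ n, σ.trmS a = τ.trmS a

variable {σ τ : Subst} {m n B : ℕ}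

theorem AgreeUpTo.mono (h : σ.AgreeUpTo τ n) (hmn : m ≤ n) : σ.AgreeUpTo τ m :=
  ⟨fun z hz => h.lam z (hz.trans hmn), fun α hα => h.mu α (hα.trans hmn),
    fun a ha => h.trm a (ha.trans hmn)⟩

theorem AgreeUpTo.skipLam (h : σ.AgreeUpTo τ n) (y : ℕ) :
    (σ.skipLam y).AgreeUpTo (τ.skipLam y) n where
  lam z hz := by
    by_cases hzy : z = y
    · simp [Subst.skipLam, hzy]
    · simp [Subst.skipLam, hzy, h.lam z hz]
  mu := h.mu
  trm := h.trm

theorem AgreeUpTo.skipMu (h : σ.AgreeUpTo τ n) (α : ℕ) :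
    (σ.skipMu α).AgreeUpTo (τ.skipMu α) n where
  lam := h.lam
  mu β hβ := by
    by_cases hβα : β = α
    · simp [Subst.skipMu, hβα]
    · simp [Subst.skipMu, hβα, h.mu β hβ]
  trm := h.trm

structure BoundedBy (σ : Subst) (B : ℕ) : Prop where
  lam : ∀ z, maxVarV (σ.lamS z) ≤ max z B
  mu : ∀ α, maxVarS (σ.muS α) ≤ max α B
  trm : ∀ a, maxVarT (σ.trmS a) ≤ max a B

theorem BoundedBy.skipLam (h : σ.BoundedBy B) (y : ℕ) : (σ.skipLam y).BoundedBy B where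
  lam z := by
    by_cases hzy : z = y
    · simp [Subst.skipLam, hzy, maxVarV]
    · simpa [Subst.skipLam, hzy] using h.lam z
  mu := h.mu
  trm := h.trm

theorem BoundedBy.skipMu (h : σ.BoundedBy B) (α : ℕ) : (σ.skipMu α).BoundedBy B where
  lam := h.lam
  mu β := by
    by_cases hβα : β = α
    · simp [Subst.skipMu, hβα, maxVarS]
    · simpa [Subst.skipMu, hβα] using h.mu β
  trm := h.trm

def restrict (σ : Subst) (m : ℕ) : Subst :=
  ⟨fun z => if z ≤ m then σ.lamS z else .var z, fun α => if α ≤ m then σ.muS α else .svar α,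
    fun a => if a ≤ m then σ.trmS a else .tvar a⟩

theorem agreeUpTo_restrict (σ : Subst) (m : ℕ) : σ.AgreeUpTo (σ.restrict m) m :=
  ⟨fun _ hz => (if_pos hz).symm, fun _ hα => (if_pos hα).symm, fun _ ha => (if_pos ha).symm⟩

theorem exists_boundedBy_restrict (σ : Subst) (m : ℕ) : ∃ B, (σ.restrict m).BoundedBy B := by
  let f z := max (maxVarV (σ.lamS z)) (max (maxVarS (σ.muS z)) (maxVarT (σ.trmS z)))
  have hf : ∀ z ≤ m, f z ≤ (Finset.range (m + 1)).sup f :=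
    fun z hz => Finset.le_sup (Finset.mem_range.2 (Nat.lt_succ_of_le hz))
  refine ⟨(Finset.range (m + 1)).sup f, fun z => ?_, fun α => ?_, fun a => ?_⟩ <;>
    simp only [restrict] <;> split_ifs with h
  · exact le_max_of_le_right ((le_max_left _ _).trans (hf z h))
  · simp [maxVarV]
  · exact le_max_of_le_right (((le_max_left _ _).trans (le_max_right _ _)).trans (hf α h))
  · simp [maxVarS]
  · exact le_max_of_le_right (((le_max_right _ _).trans (le_max_right _ _)).trans (hf a h))
  · simp [maxVarT]

end Subst

theorem subst1Lam_boundedBy (x : ℕ) (v : Val) : (subst1Lam x v).BoundedBy (maxVarV v) where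
  lam z := by
    by_cases hzx : z = x
    · simp [subst1Lam, hzx]
    · simp [subst1Lam, Subst.id, hzx, maxVarV]
  mu α := by simp [subst1Lam, Subst.id, maxVarS]
  trm a := by simp [subst1Lam, Subst.id, maxVarT]

mutual
theorem substVal_congr : ∀ (e : Val) {σ τ : Subst}, σ.AgreeUpTo τ (maxVarV e) →
    substVal σ e = substVal τ e
  | .var z, _, _, h => h.lam z le_rfl
  | .lam y t, _, _, h =>
      congrArg (Val.lam y) (substTrm_congr t ((h.mono (le_max_right _ _)).skipLam y))
  | .cns c v, _, _, h => congrArg (Val.cns c) (substVal_congr v h)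
  | .rcd fs, _, _, h => congrArg Val.rcd (substFlds_congr fs h)
theorem substFlds_congr : ∀ (e : Flds) {σ τ : Subst}, σ.AgreeUpTo τ (maxVarF e) →
    substFlds σ e = substFlds τ e
  | .nil, _, _, _ => rfl
  | .cons l v fs, _, _, h => congrArg₂ (Flds.cons l)
      (substVal_congr v (h.mono (le_max_left _ _))) (substFlds_congr fs (h.mono (le_max_right _ _)))
theorem substTrm_congr : ∀ (e : Trm) {σ τ : Subst}, σ.AgreeUpTo τ (maxVarT e) →
    substTrm σ e = substTrm τ e
  | .tvar a, _, _, h => h.trm a le_rfl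
  | .val v, _, _, h => congrArg Trm.val (substVal_congr v h)
  | .app t u, _, _, h => congrArg₂ Trm.app
      (substTrm_congr t (h.mono (le_max_left _ _))) (substTrm_congr u (h.mono (le_max_right _ _)))
  | .mu α t, _, _, h =>
      congrArg (Trm.mu α) (substTrm_congr t ((h.mono (le_max_right _ _)).skipMu α))
  | .prc p, _, _, h => congrArg Trm.prc (substPrc_congr p h)
  | .prj v l, _, _, h => congrArg (Trm.prj · l) (substVal_congr v h)
  | .cse v bs, _, _, h => congrArg₂ Trm.cse
      (substVal_congr v (h.mono (le_max_left _ _))) (substBrs_congr bs (h.mono (le_max_right _ _)))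
  | .dlt v w, _, _, h => congrArg₂ Trm.dlt
      (substVal_congr v (h.mono (le_max_left _ _))) (substVal_congr w (h.mono (le_max_right _ _)))
theorem substBrs_congr : ∀ (e : Brs) {σ τ : Subst}, σ.AgreeUpTo τ (maxVarB e) →
    substBrs σ e = substBrs τ e
  | .nil, _, _, _ => rfl
  | .cons c y t bs, _, _, h => congrArg₂ (Brs.cons c y)
      (substTrm_congr t ((h.mono ((le_max_left _ _).trans (le_max_right _ _))).skipLam y))
      (substBrs_congr bs (h.mono ((le_max_right _ _).trans (le_max_right _ _))))
theorem substStk_congr : ∀ (e : Stk) {σ τ : Subst}, σ.AgreeUpTo τ (maxVarS e) →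
    substStk σ e = substStk τ e
  | .svar α, _, _, h => h.mu α le_rfl
  | .push v π, _, _, h => congrArg₂ Stk.push
      (substVal_congr v (h.mono (le_max_left _ _))) (substStk_congr π (h.mono (le_max_right _ _)))
  | .frame t π, _, _, h => congrArg₂ Stk.frame
      (substTrm_congr t (h.mono (le_max_left _ _))) (substStk_congr π (h.mono (le_max_right _ _)))
theorem substPrc_congr : ∀ (e : Proc) {σ τ : Subst}, σ.AgreeUpTo τ (maxVarP e) →
    substPrc σ e = substPrc τ e
  | .mk t π, _, _, h => congrArg₂ Proc.mk
      (substTrm_congr t (h.mono (le_max_left _ _))) (substStk_congr π (h.mono (le_max_right _ _)))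
end

mutual
theorem maxVarV_substVal_le : ∀ (e : Val) {σ : Subst} {B : ℕ}, σ.BoundedBy B →
    maxVarV (substVal σ e) ≤ max (maxVarV e) B
  | .var z, _, _, h => h.lam z
  | .lam y t, _, _, h => by
      have := maxVarT_substTrm_le t (h.skipLam y)
      simp only [substVal, maxVarV] at *; omega
  | .cns _ v, _, _, h => maxVarV_substVal_le v h
  | .rcd fs, _, _, h => maxVarF_substFlds_le fs h
theorem maxVarF_substFlds_le : ∀ (e : Flds) {σ : Subst} {B : ℕ}, σ.BoundedBy B →
    maxVarF (substFlds σ e) ≤ max (maxVarF e) B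
  | .nil, _, _, _ => Nat.zero_le _
  | .cons _ v fs, _, _, h => by
      have := maxVarV_substVal_le v h
      have := maxVarF_substFlds_le fs h
      simp only [substFlds, maxVarF] at *; omega
theorem maxVarT_substTrm_le : ∀ (e : Trm) {σ : Subst} {B : ℕ}, σ.BoundedBy B →
    maxVarT (substTrm σ e) ≤ max (maxVarT e) B
  | .tvar a, _, _, h => h.trm a
  | .val v, _, _, h => maxVarV_substVal_le v h
  | .app t u, _, _, h => by
      have := maxVarT_substTrm_le t h
      have := maxVarT_substTrm_le u h
      simp only [substTrm, maxVarT] at *; omega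
  | .mu α t, _, _, h => by
      have := maxVarT_substTrm_le t (h.skipMu α)
      simp only [substTrm, maxVarT] at *; omega
  | .prc p, _, _, h => maxVarP_substPrc_le p h
  | .prj v _, _, _, h => maxVarV_substVal_le v h
  | .cse v bs, _, _, h => by
      have := maxVarV_substVal_le v h
      have := maxVarB_substBrs_le bs h
      simp only [substTrm, maxVarT] at *; omega
  | .dlt v w, _, _, h => by
      have := maxVarV_substVal_le v h
      have := maxVarV_substVal_le w h
      simp only [substTrm, maxVarT] at *; omega
theorem maxVarB_substBrs_le : ∀ (e : Brs) {σ : Subst} {B : ℕ}, σ.BoundedBy B →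
    maxVarB (substBrs σ e) ≤ max (maxVarB e) B
  | .nil, _, _, _ => Nat.zero_le _
  | .cons _ y t bs, _, _, h => by
      have := maxVarT_substTrm_le t (h.skipLam y)
      have := maxVarB_substBrs_le bs h
      simp only [substBrs, maxVarB] at *; omega
theorem maxVarS_substStk_le : ∀ (e : Stk) {σ : Subst} {B : ℕ}, σ.BoundedBy B →
    maxVarS (substStk σ e) ≤ max (maxVarS e) B
  | .svar α, _, _, h => h.mu α
  | .push v π, _, _, h => by
      have := maxVarV_substVal_le v h
      have := maxVarS_substStk_le π h
      simp only [substStk, maxVarS] at *; omega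
  | .frame t π, _, _, h => by
      have := maxVarT_substTrm_le t h
      have := maxVarS_substStk_le π h
      simp only [substStk, maxVarS] at *; omega
theorem maxVarP_substPrc_le : ∀ (e : Proc) {σ : Subst} {B : ℕ}, σ.BoundedBy B →
    maxVarP (substPrc σ e) ≤ max (maxVarP e) B
  | .mk t π, _, _, h => by
      have := maxVarT_substTrm_le t h
      have := maxVarS_substStk_le π h
      simp only [substPrc, maxVarP] at *; omega
end

def Subst.comp (σ τ : Subst) : Subst :=
  ⟨fun z => substVal σ (τ.lamS z), fun α => substStk σ (τ.muS α), fun a => substTrm σ (τ.trmS a)⟩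

section Subst1Lam
variable {Z : ℕ} (u : Val)

theorem subst1Lam_skipLam_of_ne {y : ℕ} (h : y ≠ Z) :
    (subst1Lam Z u).skipLam y = subst1Lam Z u := by
  ext z <;> simp [Subst.skipLam, subst1Lam, Function.update]
  rintro rfl; simp [h]

theorem subst1Lam_skipMu (α : ℕ) : (subst1Lam Z u).skipMu α = subst1Lam Z u := by
  ext β <;> simp [Subst.skipMu, subst1Lam, Subst.id, Function.update]

mutual
theorem substVal_subst1Lam_eq_self : ∀ e : Val, maxVarV e < Z → substVal (subst1Lam Z u) e = e
  | .var z, h => by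
      have hz : z ≠ Z := Nat.ne_of_lt h
      simp [substVal, subst1Lam, hz]
  | .lam y t, h => by
      have h' : y < Z ∧ maxVarT t < Z := max_lt_iff.mp h
      rw [substVal, subst1Lam_skipLam_of_ne u h'.1.ne, substTrm_subst1Lam_eq_self t h'.2]
  | .cns c v, h => congrArg (Val.cns c) (substVal_subst1Lam_eq_self v h)
  | .rcd fs, h => congrArg Val.rcd (substFlds_subst1Lam_eq_self fs h)
theorem substFlds_subst1Lam_eq_self : ∀ e : Flds, maxVarF e < Z →
    substFlds (subst1Lam Z u) e = e
  | .nil, _ => rfl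
  | .cons l v fs, h => congrArg₂ (Flds.cons l)
      (substVal_subst1Lam_eq_self v (max_lt_iff.mp h).1)
      (substFlds_subst1Lam_eq_self fs (max_lt_iff.mp h).2)
theorem substTrm_subst1Lam_eq_self : ∀ e : Trm, maxVarT e < Z → substTrm (subst1Lam Z u) e = e
  | .tvar _, _ => rfl
  | .val v, h => congrArg Trm.val (substVal_subst1Lam_eq_self v h)
  | .app t t', h => congrArg₂ Trm.app
      (substTrm_subst1Lam_eq_self t (max_lt_iff.mp h).1)
      (substTrm_subst1Lam_eq_self t' (max_lt_iff.mp h).2)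
  | .mu α t, h => by
      rw [substTrm, subst1Lam_skipMu, substTrm_subst1Lam_eq_self t (max_lt_iff.mp h).2]
  | .prc p, h => congrArg Trm.prc (substPrc_subst1Lam_eq_self p h)
  | .prj v l, h => congrArg (Trm.prj · l) (substVal_subst1Lam_eq_self v h)
  | .cse v bs, h => congrArg₂ Trm.cse
      (substVal_subst1Lam_eq_self v (max_lt_iff.mp h).1)
      (substBrs_subst1Lam_eq_self bs (max_lt_iff.mp h).2)
  | .dlt v w, h => congrArg₂ Trm.dlt
      (substVal_subst1Lam_eq_self v (max_lt_iff.mp h).1)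
      (substVal_subst1Lam_eq_self w (max_lt_iff.mp h).2)
theorem substBrs_subst1Lam_eq_self : ∀ e : Brs, maxVarB e < Z → substBrs (subst1Lam Z u) e = e
  | .nil, _ => rfl
  | .cons c y t bs, h => by
      have h' : y < Z ∧ maxVarT t < Z ∧ maxVarB bs < Z := by
        simpa only [maxVarB, max_lt_iff] using h
      rw [substBrs, subst1Lam_skipLam_of_ne u h'.1.ne, substTrm_subst1Lam_eq_self t h'.2.1,
        substBrs_subst1Lam_eq_self bs h'.2.2]
theorem substStk_subst1Lam_eq_self : ∀ e : Stk, maxVarS e < Z → substStk (subst1Lam Z u) e = e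
  | .svar _, _ => rfl
  | .push v π, h => congrArg₂ Stk.push
      (substVal_subst1Lam_eq_self v (max_lt_iff.mp h).1)
      (substStk_subst1Lam_eq_self π (max_lt_iff.mp h).2)
  | .frame t π, h => congrArg₂ Stk.frame
      (substTrm_subst1Lam_eq_self t (max_lt_iff.mp h).1)
      (substStk_subst1Lam_eq_self π (max_lt_iff.mp h).2)
theorem substPrc_subst1Lam_eq_self : ∀ e : Proc, maxVarP e < Z → substPrc (subst1Lam Z u) e = e
  | .mk t π, h => congrArg₂ Proc.mk
      (substTrm_subst1Lam_eq_self t (max_lt_iff.mp h).1)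
      (substStk_subst1Lam_eq_self π (max_lt_iff.mp h).2)
end

theorem subst1Lam_comp_skipLam {y : ℕ} (τ : Subst) (h : y ≠ Z) :
    (subst1Lam Z u).comp (τ.skipLam y) = ((subst1Lam Z u).comp τ).skipLam y := by
  ext z <;> simp only [Subst.comp, Subst.skipLam]
  by_cases hzy : z = y
  · subst hzy; simp [substVal, subst1Lam, h]
  · simp [hzy]

theorem subst1Lam_comp_skipMu (α : ℕ) (τ : Subst) :
    (subst1Lam Z u).comp (τ.skipMu α) = ((subst1Lam Z u).comp τ).skipMu α := by
  ext β <;> simp only [Subst.comp, Subst.skipMu]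
  by_cases hβα : β = α
  · subst hβα; simp [substStk, subst1Lam, Subst.id]
  · simp [hβα]

mutual
theorem substVal_subst1Lam_substVal : ∀ (e : Val) (τ : Subst), maxVarV e < Z →
    substVal (subst1Lam Z u) (substVal τ e) = substVal ((subst1Lam Z u).comp τ) e
  | .var _, _, _ => rfl
  | .lam y t, τ, h => by
      have h' : y < Z ∧ maxVarT t < Z := max_lt_iff.mp h
      rw [substVal, substVal, substVal, subst1Lam_skipLam_of_ne u h'.1.ne,
        substTrm_subst1Lam_substTrm t _ h'.2, subst1Lam_comp_skipLam u τ h'.1.ne]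
  | .cns c v, τ, h => congrArg (Val.cns c) (substVal_subst1Lam_substVal v τ h)
  | .rcd fs, τ, h => congrArg Val.rcd (substFlds_subst1Lam_substFlds fs τ h)
theorem substFlds_subst1Lam_substFlds : ∀ (e : Flds) (τ : Subst), maxVarF e < Z →
    substFlds (subst1Lam Z u) (substFlds τ e) = substFlds ((subst1Lam Z u).comp τ) e
  | .nil, _, _ => rfl
  | .cons l v fs, τ, h => congrArg₂ (Flds.cons l)
      (substVal_subst1Lam_substVal v τ (max_lt_iff.mp h).1)
      (substFlds_subst1Lam_substFlds fs τ (max_lt_iff.mp h).2)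
theorem substTrm_subst1Lam_substTrm : ∀ (e : Trm) (τ : Subst), maxVarT e < Z →
    substTrm (subst1Lam Z u) (substTrm τ e) = substTrm ((subst1Lam Z u).comp τ) e
  | .tvar _, _, _ => rfl
  | .val v, τ, h => congrArg Trm.val (substVal_subst1Lam_substVal v τ h)
  | .app t t', τ, h => congrArg₂ Trm.app
      (substTrm_subst1Lam_substTrm t τ (max_lt_iff.mp h).1)
      (substTrm_subst1Lam_substTrm t' τ (max_lt_iff.mp h).2)
  | .mu α t, τ, h => by
      rw [substTrm, substTrm, substTrm, subst1Lam_skipMu,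
        substTrm_subst1Lam_substTrm t _ (max_lt_iff.mp h).2, subst1Lam_comp_skipMu]
  | .prc p, τ, h => congrArg Trm.prc (substPrc_subst1Lam_substPrc p τ h)
  | .prj v l, τ, h => congrArg (Trm.prj · l) (substVal_subst1Lam_substVal v τ h)
  | .cse v bs, τ, h => congrArg₂ Trm.cse
      (substVal_subst1Lam_substVal v τ (max_lt_iff.mp h).1)
      (substBrs_subst1Lam_substBrs bs τ (max_lt_iff.mp h).2)
  | .dlt v w, τ, h => congrArg₂ Trm.dlt
      (substVal_subst1Lam_substVal v τ (max_lt_iff.mp h).1)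
      (substVal_subst1Lam_substVal w τ (max_lt_iff.mp h).2)
theorem substBrs_subst1Lam_substBrs : ∀ (e : Brs) (τ : Subst), maxVarB e < Z →
    substBrs (subst1Lam Z u) (substBrs τ e) = substBrs ((subst1Lam Z u).comp τ) e
  | .nil, _, _ => rfl
  | .cons c y t bs, τ, h => by
      have h' : y < Z ∧ maxVarT t < Z ∧ maxVarB bs < Z := by
        simpa only [maxVarB, max_lt_iff] using h
      rw [substBrs, substBrs, substBrs, subst1Lam_skipLam_of_ne u h'.1.ne,
        substTrm_subst1Lam_substTrm t _ h'.2.1, subst1Lam_comp_skipLam u τ h'.1.ne,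
        substBrs_subst1Lam_substBrs bs τ h'.2.2]
theorem substStk_subst1Lam_substStk : ∀ (e : Stk) (τ : Subst), maxVarS e < Z →
    substStk (subst1Lam Z u) (substStk τ e) = substStk ((subst1Lam Z u).comp τ) e
  | .svar _, _, _ => rfl
  | .push v π, τ, h => congrArg₂ Stk.push
      (substVal_subst1Lam_substVal v τ (max_lt_iff.mp h).1)
      (substStk_subst1Lam_substStk π τ (max_lt_iff.mp h).2)
  | .frame t π, τ, h => congrArg₂ Stk.frame
      (substTrm_subst1Lam_substTrm t τ (max_lt_iff.mp h).1)
      (substStk_subst1Lam_substStk π τ (max_lt_iff.mp h).2)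
theorem substPrc_subst1Lam_substPrc : ∀ (e : Proc) (τ : Subst), maxVarP e < Z →
    substPrc (subst1Lam Z u) (substPrc τ e) = substPrc ((subst1Lam Z u).comp τ) e
  | .mk t π, τ, h => congrArg₂ Proc.mk
      (substTrm_subst1Lam_substTrm t τ (max_lt_iff.mp h).1)
      (substStk_subst1Lam_substStk π τ (max_lt_iff.mp h).2)
end

end Subst1Lam

theorem convergesIn_iff_of_step {R : Proc → Proc → Prop} {p q : Proc} (hpq : R p q)
    (huniq : ∀ q', R p q' → q' = q) (hp : ¬ Final p) :
    ConvergesIn R p ↔ ConvergesIn R q := by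
  constructor
  · rintro ⟨r, hr, hfin⟩
    rcases Relation.ReflTransGen.cases_head hr with rfl | ⟨c, hc, hcr⟩
    · exact absurd hfin hp
    · exact ⟨r, huniq c hc ▸ hcr, hfin⟩
  · rintro ⟨r, hr, hfin⟩
    exact ⟨r, hr.head hpq, hfin⟩

theorem redI_val_iff {j : ℕ} {u : Val} {π : Stk} {q : Proc} :
    RedI j (.mk (.val u) π) q ↔ Red (.mk (.val u) π) q := by
  rw [RedI]
  simp

theorem convergesIn_frame_lam_iff (j : ℕ) (u : Val) (Z : ℕ) (t : Trm) (π : Stk) :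
    ConvergesIn (RedI j) (.mk (.val u) (.frame (.val (.lam Z t)) π)) ↔
      ConvergesIn (RedI j) (.mk (substTrm (subst1Lam Z u) t) π) :=
  (convergesIn_iff_of_step (redI_val_iff.2 (.frame _ _ _))
      (fun _ h => by cases redI_val_iff.1 h; rfl) (by rintro ⟨_, _, ⟨⟩⟩)).trans
    (convergesIn_iff_of_step (redI_val_iff.2 (.beta _ _ _ _))
      (fun _ h => by cases redI_val_iff.1 h; rfl) (by rintro ⟨_, _, ⟨⟩⟩))

theorem Equiv.convergesIn_subst1Lam_iff {v w : Val} (h : Equiv (.val v) (.val w))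
    (j Z : ℕ) (τ : Subst) (t : Trm) (π : Stk) :
    ConvergesIn (RedI j) (.mk (substTrm (subst1Lam Z (substVal τ v)) t) π) ↔
      ConvergesIn (RedI j) (.mk (substTrm (subst1Lam Z (substVal τ w)) t) π) :=
  (convergesIn_frame_lam_iff j _ Z t π).symm.trans
    ((h j j le_rfl _ τ).trans (convergesIn_frame_lam_iff j _ Z t π))

def Subst.updateLam (θ : Subst) (k : ℕ) (u : Val) : Subst :=
  { θ with lamS := Function.update θ.lamS k u }

theorem Equiv.convergesIn_updateLam_iff {v w : Val} (h : Equiv (.val v) (.val w))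
    {θ : Subst} {B : ℕ} (hθ : θ.BoundedBy B) (j k : ℕ) (τ : Subst) (t : Trm) (π : Stk) :
    ConvergesIn (RedI j) (.mk (substTrm (θ.updateLam k (substVal τ v)) t) π) ↔
      ConvergesIn (RedI j) (.mk (substTrm (θ.updateLam k (substVal τ w)) t) π) := by
  set Z := max (maxVarT t) B + 1
  -- `Z` is fresh for `t` and for the `θ`-images of the variables of `t`.
  have hplug : ∀ u, substTrm (θ.updateLam k u) t =
      substTrm (subst1Lam Z u) (substTrm (θ.updateLam k (.var Z)) t) := by
    intro u
    rw [substTrm_subst1Lam_substTrm u t _ (by omega)]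
    refine substTrm_congr t ⟨fun z hz => ?_, fun α hα => ?_, fun a ha => ?_⟩
    · by_cases hzk : z = k
      · subst hzk
        simp [Subst.updateLam, Subst.comp, substVal, subst1Lam]
      · have := hθ.lam z
        simp only [Subst.updateLam, Subst.comp, Function.update_of_ne hzk]
        rw [substVal_subst1Lam_eq_self u _ (by omega)]
    · have := hθ.mu α
      exact (substStk_subst1Lam_eq_self u (θ.muS α) (by omega)).symm
    · have := hθ.trm a
      exact (substTrm_subst1Lam_eq_self u (θ.trmS a) (by omega)).symm
  rw [hplug (substVal τ v), hplug (substVal τ w)]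
  exact h.convergesIn_subst1Lam_iff j Z τ _ π

-- `.inl y` records a binder `λy`, `.inr α` a binder `μα`.
def Subst.skips (σ : Subst) (L : List (ℕ ⊕ ℕ)) : Subst :=
  L.foldl (fun τ b => b.elim τ.skipLam τ.skipMu) σ

theorem Subst.skips_append_inl (σ : Subst) (L : List (ℕ ⊕ ℕ)) (y : ℕ) :
    σ.skips (L ++ [.inl y]) = (σ.skips L).skipLam y := by
  simp [Subst.skips]

theorem Subst.skips_append_inr (σ : Subst) (L : List (ℕ ⊕ ℕ)) (α : ℕ) :
    σ.skips (L ++ [.inr α]) = (σ.skips L).skipMu α := by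
  simp [Subst.skips]

theorem Subst.BoundedBy.skips {σ : Subst} {B : ℕ} (h : σ.BoundedBy B) (L : List (ℕ ⊕ ℕ)) :
    (σ.skips L).BoundedBy B := by
  induction L using List.reverseRecOn with
  | nil => exact h
  | append_singleton L b ih =>
    cases b with
    | inl y => rw [Subst.skips_append_inl]; exact ih.skipLam y
    | inr α => rw [Subst.skips_append_inr]; exact ih.skipMu α

def Subst.patchFrom (σ : Subst) (base : ℕ) (F : ℕ → Val) : Subst :=
  ⟨fun z => if z < base then σ.lamS z else F z, σ.muS, σ.trmS⟩

theorem Subst.patchFrom_skipLam (σ : Subst) {base y : ℕ} (F : ℕ → Val) (hy : y < base) :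
    (σ.patchFrom base F).skipLam y = (σ.skipLam y).patchFrom base F := by
  ext z <;> simp only [Subst.patchFrom, Subst.skipLam]
  by_cases hzy : z = y
  · subst hzy; simp [hy]
  · simp [hzy]

theorem Subst.patchFrom_skipMu (σ : Subst) (base : ℕ) (F : ℕ → Val) (α : ℕ) :
    (σ.patchFrom base F).skipMu α = (σ.skipMu α).patchFrom base F := by
  ext z <;> simp [Subst.patchFrom, Subst.skipMu]

theorem Subst.BoundedBy.patchFrom {σ : Subst} {B base : ℕ} (hσ : σ.BoundedBy B) (hB : B ≤ base)
    {F : ℕ → Val} (hF : ∀ z, maxVarV (F z) ≤ base) : (σ.patchFrom base F).BoundedBy base where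
  lam z := by
    simp only [Subst.patchFrom]
    split
    · exact (hσ.lam z).trans (max_le_max le_rfl hB)
    · exact (hF z).trans (le_max_right _ _)
  mu α := (hσ.mu α).trans (max_le_max le_rfl hB)
  trm a := (hσ.trm a).trans (max_le_max le_rfl hB)

def holeFill (σ : Subst) (base : ℕ) (A : Val) (z : ℕ) : Val :=
  substVal (σ.skips ((Encodable.decode (z - base)).getD [])) A

theorem holeFill_encode (σ : Subst) (base : ℕ) (A : Val) (L : List (ℕ ⊕ ℕ)) :
    holeFill σ base A (base + Encodable.encode L) = substVal (σ.skips L) A := by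
  simp [holeFill]

def subst1LamIf (b : Bool) (x : ℕ) (A : Val) : Subst :=
  if b then subst1Lam x A else Subst.id

theorem subst1LamIf_skipLam (b : Bool) (x : ℕ) (A : Val) (y : ℕ) :
    (subst1LamIf b x A).skipLam y = subst1LamIf (b && y != x) x A := by
  by_cases hyx : y = x
  · subst hyx
    ext z <;> cases b <;> by_cases hzy : z = y <;>
      simp [subst1LamIf, Subst.skipLam, subst1Lam, Subst.id, hzy]
  · cases b
    · ext z <;> by_cases hzy : z = y <;> simp [subst1LamIf, Subst.skipLam, Subst.id, hzy]
    · simp [subst1LamIf, hyx, subst1Lam_skipLam_of_ne A hyx]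

theorem subst1LamIf_skipMu (b : Bool) (x : ℕ) (A : Val) (α : ℕ) :
    (subst1LamIf b x A).skipMu α = subst1LamIf b x A := by
  ext β <;> by_cases hβ : β = α <;> cases b <;>
    simp_all [subst1LamIf, Subst.skipMu, subst1Lam, Subst.id]

-- The flag `b` says whether `x` is still unshadowed and `L` lists the binders passed so far;
-- an occurrence of `x` reached with `b` and `L` becomes the hole `base + encode L`.
mutual
  def holesV (x base : ℕ) : Bool → List (ℕ ⊕ ℕ) → Val → Val
    | b, L, .var z => if b = true ∧ z = x then .var (base + Encodable.encode L) else .var z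
    | b, L, .lam y t => .lam y (holesT x base (b && y != x) (L ++ [.inl y]) t)
    | b, L, .cns c v => .cns c (holesV x base b L v)
    | b, L, .rcd fs => .rcd (holesF x base b L fs)
  def holesF (x base : ℕ) : Bool → List (ℕ ⊕ ℕ) → Flds → Flds
    | _, _, .nil => .nil
    | b, L, .cons l v fs => .cons l (holesV x base b L v) (holesF x base b L fs)
  def holesT (x base : ℕ) : Bool → List (ℕ ⊕ ℕ) → Trm → Trm
    | _, _, .tvar a => .tvar a
    | b, L, .val v => .val (holesV x base b L v)
    | b, L, .app t u => .app (holesT x base b L t) (holesT x base b L u)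
    | b, L, .mu α t => .mu α (holesT x base b (L ++ [.inr α]) t)
    | b, L, .prc p => .prc (holesP x base b L p)
    | b, L, .prj v l => .prj (holesV x base b L v) l
    | b, L, .cse v bs => .cse (holesV x base b L v) (holesB x base b L bs)
    | b, L, .dlt v w => .dlt (holesV x base b L v) (holesV x base b L w)
  def holesB (x base : ℕ) : Bool → List (ℕ ⊕ ℕ) → Brs → Brs
    | _, _, .nil => .nil
    | b, L, .cons c y t bs =>
        .cons c y (holesT x base (b && y != x) (L ++ [.inl y]) t) (holesB x base b L bs)
  def holesS (x base : ℕ) : Bool → List (ℕ ⊕ ℕ) → Stk → Stk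
    | _, _, .svar α => .svar α
    | b, L, .push v π => .push (holesV x base b L v) (holesS x base b L π)
    | b, L, .frame t π => .frame (holesT x base b L t) (holesS x base b L π)
  def holesP (x base : ℕ) : Bool → List (ℕ ⊕ ℕ) → Proc → Proc
    | b, L, .mk t π => .mk (holesT x base b L t) (holesS x base b L π)
end

section Holes
variable (x base : ℕ) (σ : Subst) (A : Val)

mutual
theorem substVal_holesV : ∀ (e : Val) (b : Bool) (L : List (ℕ ⊕ ℕ)), maxVarV e < base →
    substVal ((σ.skips L).patchFrom base (holeFill σ base A)) (holesV x base b L e) =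
      substVal (σ.skips L) (substVal (subst1LamIf b x A) e)
  | .var z, b, L, h => by
      by_cases hz : b = true ∧ z = x
      · obtain ⟨rfl, rfl⟩ := hz
        simp [holesV, substVal, Subst.patchFrom, holeFill_encode, subst1LamIf, subst1Lam]
      · have hA : substVal (subst1LamIf b x A) (.var z) = .var z := by
          cases b <;> simp_all [substVal, subst1LamIf, subst1Lam, Subst.id]
        rw [holesV, if_neg hz, hA]
        simp [substVal, Subst.patchFrom, show z < base from h]
  | .lam y t, b, L, h => by
      simp only [holesV, substVal]
      rw [Subst.patchFrom_skipLam _ _ (max_lt_iff.mp h).1, ← Subst.skips_append_inl,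
        subst1LamIf_skipLam, substTrm_holesT t _ _ (max_lt_iff.mp h).2]
  | .cns c v, b, L, h => congrArg (Val.cns c) (substVal_holesV v b L h)
  | .rcd fs, b, L, h => congrArg Val.rcd (substFlds_holesF fs b L h)
theorem substFlds_holesF : ∀ (e : Flds) (b : Bool) (L : List (ℕ ⊕ ℕ)), maxVarF e < base →
    substFlds ((σ.skips L).patchFrom base (holeFill σ base A)) (holesF x base b L e) =
      substFlds (σ.skips L) (substFlds (subst1LamIf b x A) e)
  | .nil, _, _, _ => rfl
  | .cons l v fs, b, L, h => congrArg₂ (Flds.cons l)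
      (substVal_holesV v b L (max_lt_iff.mp h).1) (substFlds_holesF fs b L (max_lt_iff.mp h).2)
theorem substTrm_holesT : ∀ (e : Trm) (b : Bool) (L : List (ℕ ⊕ ℕ)), maxVarT e < base →
    substTrm ((σ.skips L).patchFrom base (holeFill σ base A)) (holesT x base b L e) =
      substTrm (σ.skips L) (substTrm (subst1LamIf b x A) e)
  | .tvar a, b, L, _ => by cases b <;> rfl
  | .val v, b, L, h => congrArg Trm.val (substVal_holesV v b L h)
  | .app t u, b, L, h => congrArg₂ Trm.app
      (substTrm_holesT t b L (max_lt_iff.mp h).1) (substTrm_holesT u b L (max_lt_iff.mp h).2)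
  | .mu α t, b, L, h => by
      simp only [holesT, substTrm]
      rw [Subst.patchFrom_skipMu, ← Subst.skips_append_inr, subst1LamIf_skipMu,
        substTrm_holesT t _ _ (max_lt_iff.mp h).2]
  | .prc p, b, L, h => congrArg Trm.prc (substPrc_holesP p b L h)
  | .prj v l, b, L, h => congrArg (Trm.prj · l) (substVal_holesV v b L h)
  | .cse v bs, b, L, h => congrArg₂ Trm.cse
      (substVal_holesV v b L (max_lt_iff.mp h).1) (substBrs_holesB bs b L (max_lt_iff.mp h).2)
  | .dlt v w, b, L, h => congrArg₂ Trm.dlt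
      (substVal_holesV v b L (max_lt_iff.mp h).1) (substVal_holesV w b L (max_lt_iff.mp h).2)
theorem substBrs_holesB : ∀ (e : Brs) (b : Bool) (L : List (ℕ ⊕ ℕ)), maxVarB e < base →
    substBrs ((σ.skips L).patchFrom base (holeFill σ base A)) (holesB x base b L e) =
      substBrs (σ.skips L) (substBrs (subst1LamIf b x A) e)
  | .nil, _, _, _ => rfl
  | .cons c y t bs, b, L, h => by
      have h' : y < base ∧ maxVarT t < base ∧ maxVarB bs < base := by
        simpa only [maxVarB, max_lt_iff] using h
      simp only [holesB, substBrs]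
      rw [substBrs_holesB bs b L h'.2.2, Subst.patchFrom_skipLam _ _ h'.1,
        ← Subst.skips_append_inl, subst1LamIf_skipLam, substTrm_holesT t _ _ h'.2.1]
theorem substStk_holesS : ∀ (e : Stk) (b : Bool) (L : List (ℕ ⊕ ℕ)), maxVarS e < base →
    substStk ((σ.skips L).patchFrom base (holeFill σ base A)) (holesS x base b L e) =
      substStk (σ.skips L) (substStk (subst1LamIf b x A) e)
  | .svar α, b, L, _ => by cases b <;> rfl
  | .push v π, b, L, h => congrArg₂ Stk.push
      (substVal_holesV v b L (max_lt_iff.mp h).1) (substStk_holesS π b L (max_lt_iff.mp h).2)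
  | .frame t π, b, L, h => congrArg₂ Stk.frame
      (substTrm_holesT t b L (max_lt_iff.mp h).1) (substStk_holesS π b L (max_lt_iff.mp h).2)
theorem substPrc_holesP : ∀ (e : Proc) (b : Bool) (L : List (ℕ ⊕ ℕ)), maxVarP e < base →
    substPrc ((σ.skips L).patchFrom base (holeFill σ base A)) (holesP x base b L e) =
      substPrc (σ.skips L) (substPrc (subst1LamIf b x A) e)
  | .mk t π, b, L, h => congrArg₂ Proc.mk
      (substTrm_holesT t b L (max_lt_iff.mp h).1) (substStk_holesS π b L (max_lt_iff.mp h).2)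
end

end Holes

def Subst.fillHoles (σ : Subst) (base k : ℕ) (v w : Val) : Subst :=
  σ.patchFrom base fun z => if z < k then holeFill σ base w z else holeFill σ base v z

theorem Subst.BoundedBy.fillHoles {σ : Subst} {B base : ℕ} (hσ : σ.BoundedBy B) (hB : B < base)
    {v w : Val} (hv : maxVarV v < base) (hw : maxVarV w < base) (k : ℕ) :
    (σ.fillHoles base k v w).BoundedBy base :=
  hσ.patchFrom hB.le fun z => by
    have hv' := maxVarV_substVal_le v (hσ.skips ((Encodable.decode (z - base)).getD []))
    have hw' := maxVarV_substVal_le w (hσ.skips ((Encodable.decode (z - base)).getD []))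
    simp only [holeFill]
    split <;> omega

section FillHoles
variable (σ : Subst) {base k : ℕ} (v w : Val)

theorem Subst.fillHoles_updateLam_left (hk : base ≤ k) :
    (σ.fillHoles base k v w).updateLam k
      (substVal (σ.skips ((Encodable.decode (k - base)).getD [])) v) = σ.fillHoles base k v w := by
  ext z <;> simp only [Subst.updateLam, Subst.fillHoles, Subst.patchFrom]
  by_cases hzk : z = k
  · subst hzk; simp [holeFill, show ¬ z < base by omega]
  · simp [hzk]

theorem Subst.fillHoles_updateLam_right (hk : base ≤ k) :
    (σ.fillHoles base k v w).updateLam k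
      (substVal (σ.skips ((Encodable.decode (k - base)).getD [])) w) =
        σ.fillHoles base (k + 1) v w := by
  ext z <;> simp only [Subst.updateLam, Subst.fillHoles, Subst.patchFrom]
  by_cases hzk : z = k
  · subst hzk; simp [holeFill, show ¬ z < base by omega]
  · have : z < k + 1 ↔ z < k := by omega
    simp [hzk, this]

end FillHoles

theorem Equiv.convergesIn_fillHoles_iff {v w : Val} (h : Equiv (.val v) (.val w)) {σ : Subst}
    {B base : ℕ} (hσ : σ.BoundedBy B) (hB : B < base) (hv : maxVarV v < base)
    (hw : maxVarV w < base) (j : ℕ) (t : Trm) (π : Stk) (d : ℕ) :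
    ConvergesIn (RedI j) (.mk (substTrm (σ.fillHoles base base v w) t) π) ↔
      ConvergesIn (RedI j) (.mk (substTrm (σ.fillHoles base (base + d) v w) t) π) := by
  induction d with
  | zero => rfl
  | succ d ih =>
    have hswitch := h.convergesIn_updateLam_iff (hσ.fillHoles hB hv hw (base + d)) j (base + d)
      (σ.skips ((Encodable.decode (base + d - base)).getD [])) t π
    rw [Subst.fillHoles_updateLam_left _ _ _ (by omega),
      Subst.fillHoles_updateLam_right _ _ _ (by omega)] at hswitch
    exact ih.trans hswitch

theorem Equiv.convergesIn_substTrm_subst1Lam_iff {v w : Val} (h : Equiv (.val v) (.val w))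
    {σ : Subst} {B : ℕ} (hσ : σ.BoundedBy B) (E : Trm) (x j : ℕ) (π : Stk) :
    ConvergesIn (RedI j) (.mk (substTrm σ (substTrm (subst1Lam x v) E)) π) ↔
      ConvergesIn (RedI j) (.mk (substTrm σ (substTrm (subst1Lam x w) E)) π) := by
  set base := max B (max (maxVarT E) (max (maxVarV v) (maxVarV w))) + 1
  set t := holesT x base true [] E
  have hstart : substTrm σ (substTrm (subst1Lam x v) E) =
      substTrm (σ.fillHoles base base v w) t := by
    refine (substTrm_holesT x base σ v E true [] (by omega)).symm.trans ?_
    congr 1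
    ext z <;> simp only [Subst.fillHoles, Subst.patchFrom, Subst.skips, List.foldl_nil]
    split_ifs <;> rfl
  have hend : substTrm σ (substTrm (subst1Lam x w) E) =
      substTrm (σ.fillHoles base (base + (maxVarT t + 1)) v w) t := by
    refine (substTrm_holesT x base σ w E true [] (by omega)).symm.trans ?_
    refine substTrm_congr t ⟨fun z hz => ?_, fun _ _ => rfl, fun _ _ => rfl⟩
    simp only [Subst.fillHoles, Subst.patchFrom, Subst.skips, List.foldl_nil]
    split_ifs <;> first | rfl | omega
  rw [hstart, hend]
  exact h.convergesIn_fillHoles_iff hσ (by omega) (by omega) (by omega) j t π _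

/-- Theorem 2 (extensionality for values): if v ≡ w then E[x:=v] ≡ E[x:=w]. -/
theorem ext_val (v w : Val) (E : Trm) (x : ℕ)
    (h : Equiv (.val v) (.val w)) :
    Equiv (substTrm (subst1Lam x v) E) (substTrm (subst1Lam x w) E) := by
  intro _ j _ π σ
  set m := max (maxVarT E) (max (maxVarV v) (maxVarV w))
  have hrestrict : ∀ A, maxVarV A ≤ m → substTrm σ (substTrm (subst1Lam x A) E) =
      substTrm (σ.restrict m) (substTrm (subst1Lam x A) E) := fun A hA =>
    have := maxVarT_substTrm_le E (subst1Lam_boundedBy x A)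
    substTrm_congr _ ((σ.agreeUpTo_restrict m).mono (by omega))
  obtain ⟨B, hB⟩ := σ.exists_boundedBy_restrict m
  rw [hrestrict v (by omega), hrestrict w (by omega)]
  exact h.convergesIn_substTrm_subst1Lam_iff hB E x j π

end CBV
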